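/- Fix c ≠ 0 and let (X,Y) solve X' = cXY, Y' = -cX² on [s₀,∞) with X(s₀)² + Y(s₀)² = ρ² > 0 and X(s₀) ≠ 0. Then lim_{s→∞} X(s) = 0 and lim_{s→∞} Y(s) = -ρ·sgn(c). -/

import Mathlib

/-!
The energy `X ^ 2 + Y ^ 2 = ρ ^ 2` is conserved, and the symmetry `(c, Y) ↦ (-c, -Y)` reduces
everything to `c > 0`. Then `Y` is nonincreasing and bounded below by `-ρ`, so it has a limit `L`,
and `L ≤ Y s₀ < ρ` because `X s₀ ≠ 0`. If `L > -ρ`, then `X ^ 2 → ρ ^ 2 - L ^ 2 > 0`, so eventually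
`Y' ≤ -c (ρ ^ 2 - L ^ 2) / 2` and `Y → -∞`, which is absurd. Hence `Y → -ρ` and `X ^ 2 → 0`.
-/

open Filter Set Topology

lemma image_sub_le_mul_sub_of_hasDerivAt_le_Ici {f f' : ℝ → ℝ} {a C : ℝ}
    (hf : ∀ x ≥ a, HasDerivAt f (f' x) x) (hf' : ∀ x ≥ a, f' x ≤ C) {x y : ℝ}
    (hx : a ≤ x) (hxy : x ≤ y) : f y - f x ≤ C * (y - x) := by
  refine (convex_Ici a).image_sub_le_mul_sub_of_deriv_le
    (fun z hz => (hf z hz).continuousAt.continuousWithinAt)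
    (fun z hz => (hf z (interior_subset hz)).differentiableAt.differentiableWithinAt)
    (fun z hz => ?_) x hx y (hx.trans hxy) hxy
  rw [(hf z (interior_subset hz)).deriv]
  exact hf' z (interior_subset hz)

lemma tendsto_atBot_of_hasDerivAt_le_neg {f f' : ℝ → ℝ} {a ε : ℝ} (hε : 0 < ε)
    (hf : ∀ x ≥ a, HasDerivAt f (f' x) x) (hf' : ∀ x ≥ a, f' x ≤ -ε) :
    Tendsto f atTop atBot := by
  have hline : Tendsto (fun y => f a + -ε * (y - a)) atTop atBot :=
    tendsto_atBot_add_const_left _ _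
      ((tendsto_atTop_add_const_right _ _ tendsto_id).const_mul_atTop_of_neg (neg_lt_zero.2 hε))
  refine tendsto_atBot_mono' _ ?_ hline
  filter_upwards [eventually_ge_atTop a] with y hy
  linarith [image_sub_le_mul_sub_of_hasDerivAt_le_Ici hf hf' le_rfl hy]

lemma AntitoneOn.exists_tendsto_atTop {f : ℝ → ℝ} {a b : ℝ} (hf : AntitoneOn f (Ici a))
    (hb : ∀ x ≥ a, b ≤ f x) : ∃ L, Tendsto f atTop (𝓝 L) := by
  have hanti : Antitone (fun x => f (max x a)) := fun x y hxy =>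
    hf (le_max_right x a) (le_max_right y a) (max_le_max_right a hxy)
  refine ⟨_, (tendsto_atTop_ciInf hanti ⟨b, ?_⟩).congr' ?_⟩
  · rintro _ ⟨x, rfl⟩
    exact hb _ (le_max_right x a)
  · filter_upwards [eventually_ge_atTop a] with x hx
    rw [max_eq_left hx]

lemma tendsto_zero_of_sq_add_sq_eq {α : Type*} {l : Filter α} {X Y : α → ℝ} {ρ : ℝ}
    (h : ∀ᶠ s in l, X s ^ 2 + Y s ^ 2 = ρ ^ 2) (hY : Tendsto Y l (𝓝 (-ρ))) :
    Tendsto X l (𝓝 0) := by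
  have hX2 : Tendsto (fun s => X s ^ 2) l (𝓝 0) := by
    have := (hY.pow 2).const_sub (ρ ^ 2)
    rw [neg_sq, sub_self] at this
    refine this.congr' ?_
    filter_upwards [h] with s hs
    linarith
  rw [tendsto_zero_iff_abs_tendsto_zero]
  simpa [Real.sqrt_sq_eq_abs, Function.comp_def] using hX2.sqrt

section System

variable {c s₀ : ℝ} {X Y : ℝ → ℝ}

lemma sq_add_sq_eq_of_hasDerivAt (hX : ∀ s ≥ s₀, HasDerivAt X (c * X s * Y s) s)
    (hY : ∀ s ≥ s₀, HasDerivAt Y (-c * X s ^ 2) s) {s : ℝ} (hs : s₀ ≤ s) :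
    X s ^ 2 + Y s ^ 2 = X s₀ ^ 2 + Y s₀ ^ 2 := by
  have hE : ∀ s ≥ s₀, HasDerivAt (fun s => X s ^ 2 + Y s ^ 2) 0 s := fun s hs =>
    (((hX s hs).pow 2).add ((hY s hs).pow 2)).congr_deriv (by push_cast; ring)
  simpa using constant_of_has_deriv_right_zero
    (fun x hx => (hE x hx.1).continuousAt.continuousWithinAt) (fun x hx => (hE x hx.1).hasDerivWithinAt) s ⟨hs, le_rfl⟩

variable {ρ : ℝ}

lemma tendsto_neg_radius_of_pos (hc : 0 < c) (hρ : 0 < ρ)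
    (hX : ∀ s ≥ s₀, HasDerivAt X (c * X s * Y s) s)
    (hY : ∀ s ≥ s₀, HasDerivAt Y (-c * X s ^ 2) s)
    (hX0 : X s₀ ≠ 0) (hinit : X s₀ ^ 2 + Y s₀ ^ 2 = ρ ^ 2) :
    Tendsto Y atTop (𝓝 (-ρ)) := by
  have hcons : ∀ s ≥ s₀, X s ^ 2 + Y s ^ 2 = ρ ^ 2 := fun s hs =>
    (sq_add_sq_eq_of_hasDerivAt hX hY hs).trans hinit
  have hYge : ∀ s ≥ s₀, -ρ ≤ Y s := fun s hs =>
    (abs_le_of_sq_le_sq' (by nlinarith [hcons s hs]) hρ.le).1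
  have hanti : AntitoneOn Y (Ici s₀) := fun x hx y _ hxy => by
    have := image_sub_le_mul_sub_of_hasDerivAt_le_Ici hY
      (fun s _ => mul_nonpos_of_nonpos_of_nonneg (neg_nonpos.2 hc.le) (sq_nonneg (X s))) hx hxy
    linarith
  obtain ⟨L, hL⟩ := hanti.exists_tendsto_atTop hYge
  have hLge : -ρ ≤ L := ge_of_tendsto hL ((eventually_ge_atTop s₀).mono hYge)
  have hLlt : L < ρ := by
    have hLY : L ≤ Y s₀ := le_of_tendsto hL <| (eventually_ge_atTop s₀).mono fun s hs =>
      hanti (mem_Ici.2 le_rfl) hs hs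
    have hY0 : Y s₀ < ρ :=
      (abs_lt_of_sq_lt_sq' (by nlinarith [pow_pos (abs_pos.2 hX0) 2, sq_abs (X s₀)]) hρ.le).2
    linarith
  obtain rfl | hLgt := hLge.eq_or_lt
  · exact hL
  exfalso
  have hX2 : Tendsto (fun s => X s ^ 2) atTop (𝓝 (ρ ^ 2 - L ^ 2)) := by
    refine ((hL.pow 2).const_sub (ρ ^ 2)).congr' ?_
    filter_upwards [eventually_ge_atTop s₀] with s hs
    linarith [hcons s hs]
  have hgap : 0 < ρ ^ 2 - L ^ 2 := by nlinarith
  obtain ⟨a, ha⟩ := eventually_atTop.1 (hX2.eventually (lt_mem_nhds (half_lt_self hgap)))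
  have hYbot : Tendsto Y atTop atBot :=
    tendsto_atBot_of_hasDerivAt_le_neg (a := max a s₀) (mul_pos hc (half_pos hgap))
      (fun s hs => hY s (le_of_max_le_right hs))
      (fun s hs => by nlinarith [ha s (le_of_max_le_left hs)])
  exact not_tendsto_nhds_of_tendsto_atBot hYbot L hL

lemma tendsto_solution_of_pos (hc : 0 < c) (hρ : 0 < ρ)
    (hX : ∀ s ≥ s₀, HasDerivAt X (c * X s * Y s) s)
    (hY : ∀ s ≥ s₀, HasDerivAt Y (-c * X s ^ 2) s)
    (hX0 : X s₀ ≠ 0) (hinit : X s₀ ^ 2 + Y s₀ ^ 2 = ρ ^ 2) :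
    Tendsto X atTop (𝓝 0) ∧ Tendsto Y atTop (𝓝 (-ρ)) := by
  have hYlim := tendsto_neg_radius_of_pos hc hρ hX hY hX0 hinit
  refine ⟨tendsto_zero_of_sq_add_sq_eq ?_ hYlim, hYlim⟩
  filter_upwards [eventually_ge_atTop s₀] with s hs
  exact (sq_add_sq_eq_of_hasDerivAt hX hY hs).trans hinit

end System

/-- For X' = cXY, Y' = -cX² with c ≠ 0, X(s₀) ≠ 0 and
X(s₀)² + Y(s₀)² = ρ² > 0, one has X(s) → 0 and Y(s) → -ρ·sgn(c) as s → ∞. -/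
theorem stmt10 (c s₀ ρ : ℝ) (hc : c ≠ 0) (hρ : 0 < ρ)
    (X Y : ℝ → ℝ)
    (hX : ∀ s ≥ s₀, HasDerivAt X (c * X s * Y s) s)
    (hY : ∀ s ≥ s₀, HasDerivAt Y (-c * X s ^ 2) s)
    (hX0 : X s₀ ≠ 0)
    (hinit : X s₀ ^ 2 + Y s₀ ^ 2 = ρ ^ 2) :
    Tendsto X atTop (nhds 0) ∧ Tendsto Y atTop (nhds (-ρ * Real.sign c)) := by
  rcases hc.lt_or_gt with hneg | hpos
  · obtain ⟨hXlim, hYlim⟩ := tendsto_solution_of_pos (neg_pos.2 hneg) hρ (Y := fun s => -Y s)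
      (fun s hs => (hX s hs).congr_deriv (by ring))
      (fun s hs => (hY s hs).neg.congr_deriv (by ring)) hX0 (by simpa using hinit)
    rw [Real.sign_of_neg hneg]
    exact ⟨hXlim, by simpa using hYlim.neg⟩
  · rw [Real.sign_of_pos hpos, mul_one]
    exact tendsto_solution_of_pos hpos hρ hX hY hX0 hinit
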